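/- Let A be a finite nonempty set, A_all ⊆ A nonempty, and for w > 1 define scores S_s^w as in the soft-constraint model: S_s^w(a) = w^n · S_h(a) for a ∈ A_all and S_s^w(a) = w^k(a) · S_h(a) for a ∉ A_all, where k(a) ≤ n − 1 and S_h : A → ℝ is positive. Then as w → ∞, Pr_s^w(a) = S_s^w(a)/∑_{a'} S_s^w(a') converges to Pr_h(a) = S_h(a)·1[a∈A_all]/∑_{a'∈A_all} S_h(a') for every a ∈ A. -/

import Mathlib

/-!
Write the score of `a` as `w ^ d a * Sh a`, with `d a = n` on `Aall` and `d a < n` off it.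
Dividing numerator and denominator by `w ^ n`, every term of degree `d a < n` tends to `0`,
so the denominator tends to `∑ a ∈ Aall, Sh a > 0` and the numerator to `Sh a · 1[a ∈ Aall]`.
-/

open Finset Filter Topology

lemma tendsto_pow_mul_div_pow_atTop {k n : ℕ} (hkn : k ≤ n) (c : ℝ) :
    Tendsto (fun w : ℝ => w ^ k * c / w ^ n) atTop (𝓝 (if k = n then c else 0)) := by
  rcases hkn.eq_or_lt with rfl | hlt
  · rw [if_pos rfl]
    refine tendsto_const_nhds.congr' ?_
    filter_upwards [eventually_ne_atTop 0] with w hw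
    rw [mul_div_cancel_left₀ c (pow_ne_zero k hw)]
  · rw [if_neg hlt.ne]
    have hpow := tendsto_pow_atTop (α := ℝ) (Nat.sub_ne_zero_of_lt hlt)
    refine ((tendsto_const_nhds (x := c)).div_atTop hpow).congr' ?_
    filter_upwards [eventually_ne_atTop 0] with w hw
    rw [eq_div_iff (pow_ne_zero n hw), ← Nat.sub_add_cancel hlt.le, pow_add, Nat.add_sub_cancel]
    field_simp

section DominantDegree

variable {ι : Type*} {s : Finset ι} {d : ι → ℕ} {n : ℕ}

lemma tendsto_sum_pow_mul_div_pow_atTop (f : ι → ℝ) (hd : ∀ i ∈ s, d i ≤ n) :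
    Tendsto (fun w : ℝ => (∑ i ∈ s, w ^ d i * f i) / w ^ n) atTop
      (𝓝 (∑ i ∈ s with d i = n, f i)) := by
  simp_rw [sum_div, sum_filter]
  exact tendsto_finsetSum s fun i hi => tendsto_pow_mul_div_pow_atTop (hd i hi) (f i)

lemma tendsto_pow_mul_div_sum_pow_mul_atTop (f : ι → ℝ) (hd : ∀ i ∈ s, d i ≤ n) {i : ι}
    (hi : i ∈ s) (htop : ∑ j ∈ s with d j = n, f j ≠ 0) :
    Tendsto (fun w : ℝ => w ^ d i * f i / ∑ j ∈ s, w ^ d j * f j) atTop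
      (𝓝 ((if d i = n then f i else 0) / ∑ j ∈ s with d j = n, f j)) := by
  refine ((tendsto_pow_mul_div_pow_atTop (hd i hi) (f i)).div
    (tendsto_sum_pow_mul_div_pow_atTop f hd) htop).congr' ?_
  filter_upwards [eventually_ne_atTop 0] with w hw
  exact div_div_div_cancel_right₀ (pow_ne_zero n hw) _ _

end DominantDegree

theorem soft_posterior_limit_general
    {α : Type*} [DecidableEq α] (A Aall : Finset α)
    (hAall : Aall.Nonempty) (hsub : Aall ⊆ A)
    (Sh : α → ℝ) (hSh : ∀ a ∈ A, 0 < Sh a)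
    (n : ℕ) (hn : 1 ≤ n) (k : α → ℕ)
    (hk : ∀ a ∈ A, a ∉ Aall → k a ≤ n - 1) :
    ∀ a ∈ A,
      Tendsto
        (fun w : ℝ =>
          (if a ∈ Aall then w ^ n * Sh a else w ^ (k a) * Sh a) /
            ∑ a' ∈ A, (if a' ∈ Aall then w ^ n * Sh a' else w ^ (k a') * Sh a'))
        atTop
        (𝓝 (if a ∈ Aall then Sh a / ∑ a' ∈ Aall, Sh a' else 0)) := by
  intro a ha
  set d : α → ℕ := fun b => if b ∈ Aall then n else k b
  have hscore (w : ℝ) (b : α) :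
      (if b ∈ Aall then w ^ n * Sh b else w ^ k b * Sh b) = w ^ d b * Sh b := by
    simp only [d]; split_ifs <;> rfl
  have hd_eq_iff : ∀ b ∈ A, d b = n ↔ b ∈ Aall := fun b hb => by
    by_cases hbAll : b ∈ Aall
    · simp [d, hbAll]
    · simp only [d, hbAll, if_false, iff_false]; have := hk b hb hbAll; omega
  have hd : ∀ b ∈ A, d b ≤ n := fun b hb => by
    by_cases hbAll : b ∈ Aall
    · exact ((hd_eq_iff b hb).2 hbAll).le
    · simp only [d, hbAll, if_false]; have := hk b hb hbAll; omega
  have hfilter : A.filter (d · = n) = Aall := by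
    ext b
    simp only [mem_filter]
    exact ⟨fun ⟨hb, hdb⟩ => (hd_eq_iff b hb).1 hdb,
      fun hb => ⟨hsub hb, (hd_eq_iff b (hsub hb)).2 hb⟩⟩
  have hpos : 0 < ∑ b ∈ Aall, Sh b := sum_pos (fun b hb => hSh b (hsub hb)) hAall
  have hlim := tendsto_pow_mul_div_sum_pow_mul_atTop Sh hd ha (hfilter ▸ hpos.ne')
  simp only [hfilter, hd_eq_iff a ha, ite_div, zero_div] at hlim
  simpa only [hscore] using hlim

theorem soft_posterior_limit
    {α : Type*} [DecidableEq α] (A Aall : Finset α)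
    (hA : A.Nonempty) (hAall : Aall.Nonempty) (hsub : Aall ⊆ A)
    (Sh : α → ℝ) (hSh : ∀ a ∈ A, 0 < Sh a)
    (n : ℕ) (hn : 1 ≤ n) (k : α → ℕ)
    (hk : ∀ a ∈ A, a ∉ Aall → k a ≤ n - 1) :
    ∀ a ∈ A,
      Tendsto
        (fun w : ℝ =>
          (if a ∈ Aall then w ^ n * Sh a else w ^ (k a) * Sh a) /
            ∑ a' ∈ A, (if a' ∈ Aall then w ^ n * Sh a' else w ^ (k a') * Sh a'))
        atTop
        (𝓝 (if a ∈ Aall then Sh a / ∑ a' ∈ Aall, Sh a' else 0)) :=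
  soft_posterior_limit_general A Aall hAall hsub Sh hSh n hn k hk
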